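/- Let H(z) ∈ ℂ[z_1,...,z_n]^n and define P_H(u,v) = Σ_{i=1}^n v_i·H_i(u_1+iv_1,...,u_n+iv_n) ∈ ℂ[u_1,...,u_n,v_1,...,v_n], where i = √-1. Then P_H is Hessian nilpotent (as a polynomial in the 2n variables (u,v)) if and only if the Jacobian matrix JH(z) = (∂H_i/∂z_j) is nilpotent over ℂ[z]. -/

import Mathlib

/-! Write `J = JH(u + √-1 v)` and `S = ∑ᵢ vᵢ (Hess Hᵢ)(u + √-1 v)`. Since `∂/∂vₖ` acts on
`G(u + √-1 v)` as `√-1 ∂/∂uₖ`, the Hessian of `P_H` is the block matrix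
`[[S, Jᵀ + √-1 S], [J + √-1 S, √-1 J + √-1 Jᵀ - S]]`. Conjugating by the shear
`(x, y) ↦ (x, y + √-1 x)` makes it block upper triangular with diagonal blocks `√-1 Jᵀ` and
`√-1 J`, so it is nilpotent iff `J` is; and `J` is nilpotent iff `JH` is, because the
substitution `z ↦ u + √-1 v` is injective (put `v = 0`). -/

open MvPolynomial

/-- The Hessian matrix of a polynomial in variables indexed by `σ`. -/
noncomputable def hess {σ : Type*} [Fintype σ] [DecidableEq σ]
    (P : MvPolynomial σ ℂ) : Matrix σ σ (MvPolynomial σ ℂ) :=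
  Matrix.of fun i j => pderiv i (pderiv j P)

/-- de Bondt--van den Essen polynomial `P_H(u,v) = ∑ v_i H_i(u + √-1 v)`, where
`Sum.inl` indexes the `u`-variables and `Sum.inr` the `v`-variables. -/
noncomputable def PH {n : ℕ} (H : Fin n → MvPolynomial (Fin n) ℂ) :
    MvPolynomial (Fin n ⊕ Fin n) ℂ :=
  ∑ i, X (Sum.inr i) *
    aeval (fun j : Fin n => X (Sum.inl j) + C Complex.I * X (Sum.inr j)) (H i)

open Matrix

theorem isNilpotent_units_conj_iff {M : Type*} [MonoidWithZero M] (u : Mˣ) (x : M) :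
    IsNilpotent (u * x * ↑u⁻¹) ↔ IsNilpotent x :=
  exists_congr fun k ↦ by
    rw [Units.conj_pow, Units.mul_left_eq_zero, Units.mul_right_eq_zero]

theorem isNilpotent_smul_iff_of_isUnit {R A : Type*} [CommSemiring R] [Semiring A] [Algebra R A]
    {c : R} (hc : IsUnit c) (x : A) : IsNilpotent (c • x) ↔ IsNilpotent x :=
  exists_congr fun k ↦ by rw [smul_pow, (hc.pow k).smul_eq_zero]

namespace Matrix

section BlockTriangular

variable {R p q : Type*} [Semiring R] [Fintype p] [Fintype q] [DecidableEq p] [DecidableEq q]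

theorem fromBlocks_zero₂₁_pow (A : Matrix p p R) (B : Matrix p q R) (D : Matrix q q R) (k : ℕ) :
    ∃ B', fromBlocks A B 0 D ^ k = fromBlocks (A ^ k) B' 0 (D ^ k) := by
  induction k with
  | zero => exact ⟨0, by simp [← fromBlocks_one]⟩
  | succ k ih =>
    obtain ⟨B', hB'⟩ := ih
    exact ⟨A ^ k * B + B' * D, by simp [pow_succ, hB', fromBlocks_multiply]⟩

theorem isNilpotent_fromBlocks_zero₂₁_iff (A : Matrix p p R) (B : Matrix p q R)
    (D : Matrix q q R) :
    IsNilpotent (fromBlocks A B 0 D) ↔ IsNilpotent A ∧ IsNilpotent D := by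
  constructor
  · rintro ⟨k, hk⟩
    obtain ⟨B', hB'⟩ := fromBlocks_zero₂₁_pow A B D k
    rw [hB', ← fromBlocks_zero, fromBlocks_inj] at hk
    exact ⟨⟨k, hk.1⟩, ⟨k, hk.2.2.2⟩⟩
  · rintro ⟨⟨a, ha⟩, ⟨d, hd⟩⟩
    obtain ⟨Ba, hBa⟩ := fromBlocks_zero₂₁_pow A B D a
    obtain ⟨Bd, hBd⟩ := fromBlocks_zero₂₁_pow A B D d
    exact ⟨a + d, by simp [pow_add, hBa, hBd, ha, hd, fromBlocks_multiply]⟩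

end BlockTriangular

section Shear

variable {R p : Type*} [Semiring R] [DecidableEq p]

def shear (c : R) : Matrix (p ⊕ p) (p ⊕ p) R :=
  fromBlocks 1 0 (c • 1) 1

theorem shear_zero : (shear 0 : Matrix (p ⊕ p) (p ⊕ p) R) = 1 := by
  simp [shear, fromBlocks_one]

theorem shear_mul_shear [Fintype p] (c d : R) :
    (shear c : Matrix (p ⊕ p) (p ⊕ p) R) * shear d = shear (c + d) := by
  simp [shear, fromBlocks_multiply, add_smul, add_comm]

end Shear

section HessianShape

variable {R p : Type*} [CommRing R] [Fintype p] [DecidableEq p]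

theorem fromBlocks_eq_shear_mul_mul_shear {c : R} (hc : c * c = -1) (J S : Matrix p p R) :
    fromBlocks S (Jᵀ + c • S) (J + c • S) (c • J + c • Jᵀ - S) =
      shear c * fromBlocks (c • Jᵀ) (Jᵀ + c • S) 0 (c • J) * shear (-c) := by
  simp only [shear, fromBlocks_multiply, Matrix.one_mul, Matrix.mul_one, Matrix.zero_mul,
    Matrix.mul_zero, add_zero, zero_add, Matrix.smul_mul, Matrix.mul_smul, smul_add, smul_smul]
  congr 1
  · linear_combination (norm := module) hc • S
  · module
  · linear_combination (norm := module) c • hc • S + hc • J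
  · linear_combination (norm := module) -(hc • S)

theorem isNilpotent_fromBlocks_iff_of_mul_self_eq_neg_one {c : R} (hc : c * c = -1)
    (J S : Matrix p p R) :
    IsNilpotent (fromBlocks S (Jᵀ + c • S) (J + c • S) (c • J + c • Jᵀ - S)) ↔ IsNilpotent J := by
  have hcu : IsUnit c := IsUnit.of_mul_eq_one (-c) (by rw [mul_neg, hc, neg_neg])
  let u : (Matrix (p ⊕ p) (p ⊕ p) R)ˣ :=
    ⟨shear c, shear (-c), by rw [shear_mul_shear, add_neg_cancel, shear_zero],
      by rw [shear_mul_shear, neg_add_cancel, shear_zero]⟩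
  rw [fromBlocks_eq_shear_mul_mul_shear hc]
  refine (isNilpotent_units_conj_iff u _).trans ?_
  rw [isNilpotent_fromBlocks_zero₂₁_iff, isNilpotent_smul_iff_of_isUnit hcu,
    isNilpotent_smul_iff_of_isUnit hcu, isNilpotent_transpose_iff, and_self]

end HessianShape

end Matrix

namespace MvPolynomial

theorem pderiv_aeval {R σ τ : Type*} [CommSemiring R] [Fintype σ] [DecidableEq σ]
    (f : σ → MvPolynomial τ R) (i : τ) (p : MvPolynomial σ R) :
    pderiv i (aeval f p) = ∑ j, pderiv i (f j) * aeval f (pderiv j p) := by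
  induction p using MvPolynomial.induction_on with
  | C a => simp only [aeval_C, algebraMap_eq, pderiv_C, map_zero, mul_zero,
      Finset.sum_const_zero]
  | add p q hp hq => simp only [map_add, hp, hq, mul_add, Finset.sum_add_distrib]
  | mul_X p k hp =>
    rw [map_mul, aeval_X, pderiv_mul, hp, Finset.sum_mul]
    simp_rw [pderiv_mul, map_add, map_mul, aeval_X, mul_add, Finset.sum_add_distrib]
    congr 1
    · exact Finset.sum_congr rfl fun j _ ↦ by ring
    · simp [pderiv_X, Pi.single_apply, mul_comm]

theorem C_I_mul_C_I {σ : Type*} : (C Complex.I : MvPolynomial σ ℂ) * C Complex.I = -1 := by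
  rw [← C_mul, Complex.I_mul_I, C_neg, C_1]

end MvPolynomial

noncomputable def substUV (n : ℕ) : MvPolynomial (Fin n) ℂ →ₐ[ℂ] MvPolynomial (Fin n ⊕ Fin n) ℂ :=
  aeval fun j ↦ X (Sum.inl j) + C Complex.I * X (Sum.inr j)

theorem substUV_injective (n : ℕ) : Function.Injective (substUV n) := by
  have hleft : (aeval (Sum.elim X 0)).comp (substUV n) = AlgHom.id ℂ _ := by
    ext j
    simp [substUV]
  exact Function.LeftInverse.injective (g := aeval (Sum.elim X 0)) fun p ↦ by
    rw [← AlgHom.comp_apply, hleft, AlgHom.id_apply]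

theorem pderiv_inl_substUV {n : ℕ} (k : Fin n) (p : MvPolynomial (Fin n) ℂ) :
    pderiv (Sum.inl k) (substUV n p) = substUV n (pderiv k p) := by
  rw [substUV, pderiv_aeval]
  simp [pderiv_X, Pi.single_apply]

theorem pderiv_inr_substUV {n : ℕ} (k : Fin n) (p : MvPolynomial (Fin n) ℂ) :
    pderiv (Sum.inr k) (substUV n p) = C Complex.I * substUV n (pderiv k p) := by
  rw [substUV, pderiv_aeval]
  simp [pderiv_X, Pi.single_apply]

theorem PH_eq_sum_substUV {n : ℕ} (H : Fin n → MvPolynomial (Fin n) ℂ) :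
    PH H = ∑ i, X (Sum.inr i) * substUV n (H i) := rfl

theorem pderiv_inl_PH {n : ℕ} (H : Fin n → MvPolynomial (Fin n) ℂ) (k : Fin n) :
    pderiv (Sum.inl k) (PH H) = PH fun i ↦ pderiv k (H i) := by
  simp [PH_eq_sum_substUV, pderiv_inl_substUV, pderiv_X]

theorem pderiv_inr_PH {n : ℕ} (H : Fin n → MvPolynomial (Fin n) ℂ) (k : Fin n) :
    pderiv (Sum.inr k) (PH H) = substUV n (H k) + C Complex.I * PH fun i ↦ pderiv k (H i) := by
  simp [PH_eq_sum_substUV, pderiv_inr_substUV, pderiv_X, Pi.single_apply, Finset.mul_sum,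
    Finset.sum_add_distrib, mul_left_comm, add_comm]

theorem hess_PH {n : ℕ} (H : Fin n → MvPolynomial (Fin n) ℂ) :
    let c : MvPolynomial (Fin n ⊕ Fin n) ℂ := C Complex.I
    let J := (Matrix.of fun i j : Fin n ↦ pderiv j (H i)).map (substUV n)
    let S := Matrix.of fun j k : Fin n ↦ PH fun i ↦ pderiv j (pderiv k (H i))
    hess (PH H) = fromBlocks S (Jᵀ + c • S) (J + c • S) (c • J + c • Jᵀ - S) := by
  intro c J S
  ext (j | j) (k | k) : 1
  · simp [hess, S, pderiv_inl_PH]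
  · simp [hess, S, J, c, pderiv_inr_PH, pderiv_inl_PH, pderiv_inl_substUV]
  · simp [hess, S, J, c, pderiv_inr_PH, pderiv_inl_PH]
  · simp only [hess, S, J, c, of_apply, fromBlocks_apply₂₂, Matrix.sub_apply, Matrix.add_apply,
      Matrix.smul_apply, transpose_apply, map_apply, smul_eq_mul, pderiv_inr_PH, map_add,
      pderiv_C_mul, pderiv_inr_substUV]
    linear_combination (PH fun i ↦ pderiv j (pderiv k (H i))) * C_I_mul_C_I

theorem PH_hessian_nilpotent_iff {n : ℕ} (H : Fin n → MvPolynomial (Fin n) ℂ) :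
    IsNilpotent (hess (PH H)) ↔
      IsNilpotent (Matrix.of fun i j : Fin n => pderiv j (H i)) := by
  rw [hess_PH, isNilpotent_fromBlocks_iff_of_mul_self_eq_neg_one C_I_mul_C_I,
    ← AlgHom.mapMatrix_apply, IsNilpotent.map_iff (map_injective (substUV_injective n))]
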